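/- The partial matching μ(S) = S ∪ {a(S)} on the face poset of the complex J(L) of bounded-below sets of a finite lattice L is acyclic: there is no sequence of distinct S_1,…,S_t ∈ Σ, t ≥ 2, with μ(S_i) covering S_{i+1} for all i (indices cyclic). In particular, along any such hypothetical cycle one would have a(S_1) < a(S_2) < ⋯ < a(S_t) < a(S_1), a contradiction. -/

import Mathlib

open scoped Classical

/-- `core S` is what remains of the finite set `S` after repeatedly removing a least
element as long as one exists. -/
noncomputable def core {L : Type*} [Lattice L] (S : Finset L) : Finset L :=
  if h : ∃ m ∈ S, ∀ y ∈ S, m ≤ y then core (S.erase h.choose) else S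
termination_by S.card
decreasing_by exact Finset.card_erase_lt_of_mem h.choose_spec.1

lemma core_eq {L : Type*} [Lattice L] (S : Finset L) :
    core S = if h : ∃ m ∈ S, ∀ y ∈ S, m ≤ y then core (S.erase h.choose) else S := by
  rw [core]

lemma core_erase {L : Type*} [Lattice L] {S : Finset L} {m : L} (hm : m ∈ S)
    (hle : ∀ y ∈ S, m ≤ y) : core S = core (S.erase m) := by
  have h : ∃ m ∈ S, ∀ y ∈ S, m ≤ y := ⟨m, hm, hle⟩
  have hc : h.choose = m :=
    le_antisymm (h.choose_spec.2 m hm) (hle _ h.choose_spec.1)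
  rw [core_eq, dif_pos h, hc]

lemma core_subset {L : Type*} [Lattice L] (S : Finset L) : core S ⊆ S := by
  induction S using Finset.strongInductionOn with
  | _ S ih =>
    rw [core_eq]
    split_ifs with h
    · exact (ih _ (Finset.erase_ssubset h.choose_spec.1)).trans (Finset.erase_subset _ _)
    · exact subset_rfl

/-- Elements dropped by `core` lie below all of `core S` and are comparable to all of `S`. -/
lemma core_dropped {L : Type*} [Lattice L] (S : Finset L) :
    ∀ x ∈ S, x ∉ core S → (∀ y ∈ core S, x ≤ y) ∧ (∀ y ∈ S, x ≤ y ∨ y ≤ x) := by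
  induction S using Finset.strongInductionOn with
  | _ S ih =>
    intro x hx hxc
    rw [core_eq] at hxc ⊢
    split_ifs with h
    · rw [dif_pos h] at hxc
      obtain ⟨hmS, hmle⟩ := h.choose_spec
      set m := h.choose with hmdef
      by_cases hxm : x = m
      · subst hxm
        refine ⟨fun y hy => hmle y ((core_subset _).trans (Finset.erase_subset _ _) hy),
          fun y hy => Or.inl (hmle y hy)⟩
      · have hx' : x ∈ S.erase m := Finset.mem_erase.mpr ⟨hxm, hx⟩
        have H := ih (S.erase m) (Finset.erase_ssubset hmS) x hx' hxc
        refine ⟨H.1, fun y hy => ?_⟩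
        by_cases hym : y = m
        · exact Or.inr (hym ▸ hmle x hx)
        · exact H.2 y (Finset.mem_erase.mpr ⟨hym, hy⟩)
    · rw [dif_neg h] at hxc
      exact absurd hx hxc

/-- If every element of `T` outside `C` is comparable to everything in `T` and below
`T ∩ C`, then `core T ⊆ C`. -/
lemma core_subset_of {L : Type*} [Lattice L] (C : Finset L) (T : Finset L)
    (hyp : ∀ x ∈ T, x ∉ C → (∀ y ∈ T, x ≤ y ∨ y ≤ x) ∧ (∀ y ∈ T, y ∈ C → x ≤ y)) :
    core T ⊆ C := by
  induction T using Finset.strongInductionOn with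
  | _ T ih =>
    by_cases hD : ∀ x ∈ T, x ∈ C
    · exact fun x hx => hD x (core_subset _ hx)
    · push_neg at hD
      obtain ⟨x0, hx0T, hx0C⟩ := hD
      have hne : (T.filter (· ∉ C)).Nonempty :=
        ⟨x0, Finset.mem_filter.mpr ⟨hx0T, hx0C⟩⟩
      obtain ⟨m, hmD, hmmin⟩ := Finset.exists_minimal hne
      rw [Finset.mem_filter] at hmD
      have hleast : ∀ y ∈ T, m ≤ y := by
        intro y hy
        by_cases hyC : y ∈ C
        · exact (hyp m hmD.1 hmD.2).2 y hy hyC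
        · rcases (hyp m hmD.1 hmD.2).1 y hy with h1 | h1
          · exact h1
          · rcases eq_or_lt_of_le h1 with h2 | h2
            · exact h2.ge
            · exact absurd h2 (not_lt_of_ge (hmmin (Finset.mem_filter.mpr ⟨hy, hyC⟩) h2.le))
      rw [core_erase hmD.1 hleast]
      refine ih (T.erase m) (Finset.erase_ssubset hmD.1) ?_
      intro x hx hxC
      have hxT := Finset.mem_of_mem_erase hx
      exact ⟨fun y hy => (hyp x hxT hxC).1 y (Finset.mem_of_mem_erase hy),
        fun y hy hyC => (hyp x hxT hxC).2 y (Finset.mem_of_mem_erase hy) hyC⟩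

/-- `aFun S = a(S)` is the meet of the elements of `S` after removal of the maximal
initial chain of minima. -/
noncomputable def aFun {L : Type*} [Lattice L] [OrderTop L] (S : Finset L) : L :=
  (core S).inf id

/-- The key monotonicity: for any `T ⊆ S ∪ {a(S)}` we have `a(S) ≤ a(T)`. -/
lemma aFun_le {L : Type*} [Lattice L] [OrderTop L] {S T : Finset L}
    (hT : T ⊆ insert (aFun S) S) : aFun S ≤ aFun T := by
  have hsub : core T ⊆ core S := by
    apply core_subset_of
    intro x hxT hxC
    rcases Finset.mem_insert.mp (hT hxT) with hxa | hxS
    · subst hxa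
      constructor
      · intro y hyT
        rcases Finset.mem_insert.mp (hT hyT) with hya | hyS
        · exact Or.inl hya.ge
        · by_cases hyC : y ∈ core S
          · exact Or.inl (Finset.inf_le hyC)
          · exact Or.inr (Finset.le_inf fun z hz => (core_dropped S y hyS hyC).1 z hz)
      · intro y _ hyC
        exact Finset.inf_le hyC
    · have H := core_dropped S x hxS hxC
      constructor
      · intro y hyT
        rcases Finset.mem_insert.mp (hT hyT) with hya | hyS
        · exact Or.inl (hya ▸ Finset.le_inf fun z hz => H.1 z hz)
        · exact H.2 y hyS
      · intro y _ hyC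
        exact H.1 y hyC
  exact Finset.inf_mono hsub

/-- The matching map `μ(S) = S ∪ {a(S)}`. -/
noncomputable def muFun {L : Type*} [Lattice L] [OrderTop L] (S : Finset L) : Finset L :=
  insert (aFun S) S

/-- `Σ`: the non-chain simplices `S` of the complex `J(L)` of bounded-below sets with
`a(S) ∉ S`. -/
def SigmaSet (L : Type*) [Lattice L] [BoundedOrder L] : Set (Finset L) :=
  {S | S.Nonempty ∧ (∀ x ∈ S, x ≠ ⊥ ∧ x ≠ ⊤) ∧ S.inf id ≠ ⊥ ∧
    ¬ IsChain (· ≤ ·) (↑S : Set L) ∧ aFun S ∉ S}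

/-- The partial matching `μ(S) = S ∪ {a(S)}` on the face poset of `J(L)` is acyclic:
there is no cyclic sequence of distinct `S_1, …, S_t ∈ Σ`, `t ≥ 2`, with `μ(S_i)`
covering `S_{i+1}` (indices mod `t`) in the inclusion order on simplices. -/
theorem muFun_acyclic {L : Type*} [Lattice L] [BoundedOrder L] [Fintype L]
    (t : ℕ) (ht : 2 ≤ t) (Z : Fin t → Finset L)
    (hdist : Function.Injective Z)
    (hZ : ∀ i, Z i ∈ SigmaSet L)
    (hcov : ∀ i : Fin t,
      Z ⟨((i : ℕ) + 1) % t, Nat.mod_lt _ (by omega)⟩ ⊆ muFun (Z i) ∧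
      (muFun (Z i)).card = (Z ⟨((i : ℕ) + 1) % t, Nat.mod_lt _ (by omega)⟩).card + 1) :
    False := by
  have ht0 : 0 < t := by omega
  -- a(S) ∉ S for each simplex in the cycle
  have hnotmem : ∀ i, aFun (Z i) ∉ Z i := fun i => (hZ i).2.2.2.2
  -- the strict increase along each step of the cycle
  have hstep : ∀ i : Fin t,
      aFun (Z i) < aFun (Z ⟨((i : ℕ) + 1) % t, Nat.mod_lt _ ht0⟩) := by
    intro i
    set j : Fin t := ⟨((i : ℕ) + 1) % t, Nat.mod_lt _ ht0⟩ with hj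
    have hle : aFun (Z i) ≤ aFun (Z j) := aFun_le (hcov i).1
    -- j ≠ i
    have hji : j ≠ i := by
      intro hji
      have : ((i : ℕ) + 1) % t = (i : ℕ) := congrArg Fin.val hji
      have hi : (i : ℕ) < t := i.isLt
      by_cases hlt : (i : ℕ) + 1 < t
      · rw [Nat.mod_eq_of_lt hlt] at this; omega
      · have h1 : (i : ℕ) + 1 = t := by omega
        rw [h1, Nat.mod_self] at this; omega
    -- a(Z i) ∈ Z j
    have hmem : aFun (Z i) ∈ Z j := by
      by_contra hmem
      have hsub : Z j ⊆ Z i := by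
        intro x hx
        rcases Finset.mem_insert.mp ((hcov i).1 hx) with h | h
        · exact absurd (h ▸ hx) hmem
        · exact h
      have hcard : (Z i).card ≤ (Z j).card := by
        have h2 := (hcov i).2
        rw [muFun, Finset.card_insert_of_notMem (hnotmem i)] at h2
        have h3 : (Z i).card + 1 = (Z j).card + 1 := h2
        omega
      exact hji (hdist (Finset.eq_of_subset_of_card_le hsub hcard))
    have hne : aFun (Z i) ≠ aFun (Z j) := by
      intro h
      exact hnotmem j (h ▸ hmem)
    exact hle.lt_of_ne hne
  -- iterate around the cycle
  set g : ℕ → L := fun n => aFun (Z ⟨n % t, Nat.mod_lt _ ht0⟩) with hg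
  have hmono : StrictMono g := by
    apply strictMono_nat_of_lt_succ
    intro n
    have := hstep ⟨n % t, Nat.mod_lt _ ht0⟩
    have heq : ((n % t) + 1) % t = (n + 1) % t := by
      conv_rhs => rw [Nat.add_mod]
      rw [Nat.mod_eq_of_lt (show 1 < t by omega)]
    simpa [hg, heq] using this
  have : g 0 < g t := hmono (by omega)
  rw [hg] at this
  simp only [Nat.zero_mod, Nat.mod_self] at this
  exact lt_irrefl _ this
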